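/- arXiv:2603.14653 — 2 statements merged into one kernel-verified Lean document; each statement's English description precedes it below -/
import Mathlib

section
/- Let F = F(T,A) ⊆ ℝ^n be a self-affine set (T ∈ M_n(ℝ) expanding, A ⊂ ℝ^n finite nonempty). Then there exist an integer m ≥ 2, a vector a ∈ ℤ^n, an integer c₀ ≥ 1 and a nonempty compact set Γ ⊆ ℝ^n of positive Lebesgue measure such that, with M := m·I and D := a + c₀·{0,1,…,m−1}^n ⊂ ℤ^n (so that #D = m^n = |det M|), one has Γ = ⋃_{d∈D} M^{-1}(Γ + d) and F ⊆ Γ. In other words, every self-affine set is contained in an integral self-affine tile. -/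
open Filter MeasureTheory Metric Set Matrix
open scoped Topology ENNReal NNReal

noncomputable section

namespace FracPert

/-- View a plain vector as a point of Euclidean space. -/
def euc {n : ℕ} (v : Fin n → ℝ) : EuclideanSpace ℝ (Fin n) := WithLp.toLp 2 v

/-- The real matrix associated with an integer matrix. -/
def intMat {n : ℕ} (T : Matrix (Fin n) (Fin n) ℤ) : Matrix (Fin n) (Fin n) ℝ :=
  T.map fun x => (x : ℝ)

/-- An integer vector as a real vector. -/
def zVec {n : ℕ} (v : Fin n → ℤ) : Fin n → ℝ := fun i => (v i : ℝ)

/-- An integer matrix is expanding if all of its complex eigenvalues have modulus `> 1`. -/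
def IsExpandingZ {n : ℕ} (T : Matrix (Fin n) (Fin n) ℤ) : Prop :=
  ∀ μ : ℂ, (T.map fun x => (x : ℂ)).charpoly.IsRoot μ → 1 < ‖μ‖

/-- A real matrix is expanding if all of its complex eigenvalues have modulus `> 1`. -/
def IsExpandingR {n : ℕ} (T : Matrix (Fin n) (Fin n) ℝ) : Prop :=
  ∀ μ : ℂ, (T.map fun x => (x : ℂ)).charpoly.IsRoot μ → 1 < ‖μ‖

/-- `F` is the self-affine set generated by the real matrix `M` and the digit set `A`:
`F` is nonempty, compact, and `F = ⋃_{a ∈ A} M⁻¹ (F + a)`. -/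
def IsSelfAffineR {n : ℕ} (M : Matrix (Fin n) (Fin n) ℝ) (A : Set (Fin n → ℝ))
    (F : Set (EuclideanSpace ℝ (Fin n))) : Prop :=
  F.Nonempty ∧ IsCompact F ∧
    F = ⋃ a ∈ A, (fun x : EuclideanSpace ℝ (Fin n) => euc (M⁻¹ *ᵥ (x + euc a))) '' F

/-- Integral self-affine set. -/
def IsSelfAffineZ {n : ℕ} (T : Matrix (Fin n) (Fin n) ℤ) (A : Set (Fin n → ℤ))
    (F : Set (EuclideanSpace ℝ (Fin n))) : Prop :=
  IsSelfAffineR (intMat T) (zVec '' A) F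

/-- The iterated digit sets `A_k = {∑_{i=1}^k T^{k-i} a_i : a_i ∈ A}`. -/
def digitSetIter {n : ℕ} (T : Matrix (Fin n) (Fin n) ℤ) (A : Set (Fin n → ℤ)) (k : ℕ) :
    Set (Fin n → ℤ) :=
  { v | ∃ a : Fin k → Fin n → ℤ, (∀ i, a i ∈ A) ∧
      v = ∑ i : Fin k, (T ^ (k - 1 - (i : ℕ))) *ᵥ a i }

/-- The iterated digit sets for a real matrix. -/
def digitSetIterR {n : ℕ} (J : Matrix (Fin n) (Fin n) ℝ) (A : Set (Fin n → ℝ)) (k : ℕ) :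
    Set (Fin n → ℝ) :=
  { v | ∃ a : Fin k → Fin n → ℝ, (∀ i, a i ∈ A) ∧
      v = ∑ i : Fin k, (J ^ (k - 1 - (i : ℕ))) *ᵥ a i }

/-- The signed floor. -/
def sfloor (t : ℝ) : ℤ := if 0 ≤ t then ⌊t⌋ else -⌊|t|⌋

/-- The signed ceiling. -/
def sceil (t : ℝ) : ℤ := if 0 ≤ t then ⌈t⌉ else -⌈|t|⌉

/-- Entrywise signed floor of a vector. -/
def sfloorVec {n : ℕ} (v : Fin n → ℝ) : Fin n → ℤ := fun i => sfloor (v i)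

/-- The perturbed matrix `T_k`: the entrywise signed ceiling of `J^k`. -/
def pertMat {n : ℕ} (J : Matrix (Fin n) (Fin n) ℝ) (k : ℕ) : Matrix (Fin n) (Fin n) ℤ :=
  Matrix.of fun i j => sceil ((J ^ k) i j)

/-- A real Jordan block for a real eigenvalue: lower triangular, `lam` on the diagonal,
`1` on the subdiagonal. -/
def realJordanBlock (d : ℕ) (lam : ℝ) : Matrix (Fin d) (Fin d) ℝ :=
  Matrix.of fun i j =>
    if (i : ℕ) = (j : ℕ) then lam else if (i : ℕ) = (j : ℕ) + 1 then 1 else 0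

/-- A real Jordan block for a non-real eigenvalue `a + b i`, made of `2 × 2` blocks:
`C = [[a, -b], [b, a]]` on the block diagonal and `I₂` on the block subdiagonal. -/
def complexJordanBlock (m : ℕ) (a b : ℝ) : Matrix (Fin (2 * m)) (Fin (2 * m)) ℝ :=
  Matrix.of fun i j =>
    if (i : ℕ) / 2 = (j : ℕ) / 2 then
      (if (i : ℕ) % 2 = (j : ℕ) % 2 then a else if (i : ℕ) % 2 = 0 then -b else b)
    else if (i : ℕ) / 2 = (j : ℕ) / 2 + 1 then
      (if (i : ℕ) % 2 = (j : ℕ) % 2 then 1 else 0)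
    else 0

/-- `B` is a real Jordan-type block with eigenvalue modulus `ρ` and algebraic multiplicity
`np`. -/
def IsJordanBlock {d : ℕ} (B : Matrix (Fin d) (Fin d) ℝ) (ρ : ℝ) (np : ℕ) : Prop :=
  (d = np ∧ ∃ lam : ℝ, |lam| = ρ ∧ B = realJordanBlock d lam) ∨
  (∃ h : d = 2 * np, ∃ a b : ℝ, b ≠ 0 ∧ Real.sqrt (a ^ 2 + b ^ 2) = ρ ∧
      B = Matrix.reindex (finCongr h).symm (finCongr h).symm (complexJordanBlock np a b))

/-- The index identification `(Σ p, Fin (d p)) ≃ Fin n` respects the block order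
(lexicographic order on the sigma type). -/
def IsJordanArrangement {n s : ℕ} (d : Fin s → ℕ)
    (e : ((p : Fin s) × Fin (d p)) ≃ Fin n) : Prop :=
  ∀ x y : (p : Fin s) × Fin (d p), Sigma.Lex (· < ·) (fun _ => (· < ·)) x y → e x < e y

/-- `J` is a real Jordan-type matrix: a block diagonal matrix with real Jordan-type
blocks whose eigenvalue moduli are `ρ 0 < ρ 1 < ⋯`, all `> 1`. -/
def IsRealJordanLike {n s : ℕ} (J : Matrix (Fin n) (Fin n) ℝ) (ρ : Fin s → ℝ) : Prop :=
  (∀ p, 1 < ρ p) ∧ StrictMono ρ ∧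
  ∃ (d np : Fin s → ℕ) (B : ∀ p, Matrix (Fin (d p)) (Fin (d p)) ℝ)
    (e : ((p : Fin s) × Fin (d p)) ≃ Fin n),
    (∀ p, 0 < np p) ∧ (∀ p, IsJordanBlock (B p) (ρ p) (np p)) ∧
    IsJordanArrangement d e ∧
    J = Matrix.reindex e e (Matrix.blockDiagonal' B)

/-- Perturbation data for an integer matrix `T`: an invertible real matrix `P` such that
`J = P⁻¹ T P` is a real Jordan-type matrix and distinct points of the lattice `P⁻¹ ℤ^n`
are at distance `> n`. -/
def IsPerturbationData {n s : ℕ} (T : Matrix (Fin n) (Fin n) ℤ)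
    (P : Matrix (Fin n) (Fin n) ℝ) (ρ : Fin s → ℝ) : Prop :=
  IsUnit P ∧ IsRealJordanLike (P⁻¹ * intMat T * P) ρ ∧
    ∀ v w : Fin n → ℤ, v ≠ w →
      (n : ℝ) < ‖euc (P⁻¹ *ᵥ zVec v - P⁻¹ *ᵥ zVec w)‖

/-- The digit sets `Ã_k = P⁻¹ A_k`. -/
def tildeDigits {n : ℕ} (T : Matrix (Fin n) (Fin n) ℤ) (A : Set (Fin n → ℤ))
    (P : Matrix (Fin n) (Fin n) ℝ) (k : ℕ) : Set (Fin n → ℝ) :=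
  (fun a => P⁻¹ *ᵥ zVec a) '' digitSetIter T A k

/-- The perturbed digit sets `D_k = ⌊Ã_k⌋±`. -/
def pertDigits {n : ℕ} (T : Matrix (Fin n) (Fin n) ℤ) (A : Set (Fin n → ℤ))
    (P : Matrix (Fin n) (Fin n) ℝ) (k : ℕ) : Set (Fin n → ℤ) :=
  sfloorVec '' tildeDigits T A P k

/-- `N(S, δ)`: the smallest number of sets of diameter at most `δ` needed to cover `S`. -/
def coverNum {n : ℕ} (S : Set (EuclideanSpace ℝ (Fin n))) (δ : ℝ) : ℕ :=
  sInf { m : ℕ | ∃ C : Fin m → Set (EuclideanSpace ℝ (Fin n)),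
    (∀ i, Metric.diam (C i) ≤ δ) ∧ S ⊆ ⋃ i, C i }

/-- The lower box dimension. -/
def lowerBoxDim {n : ℕ} (S : Set (EuclideanSpace ℝ (Fin n))) : ℝ :=
  liminf (fun δ : ℝ => Real.log (coverNum S δ) / Real.log (1 / δ)) (𝓝[>] (0 : ℝ))

/-- The upper box dimension. -/
def upperBoxDim {n : ℕ} (S : Set (EuclideanSpace ℝ (Fin n))) : ℝ :=
  limsup (fun δ : ℝ => Real.log (coverNum S δ) / Real.log (1 / δ)) (𝓝[>] (0 : ℝ))

/-- The integer lattice `ℤ^n` inside Euclidean space. -/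
def intLattice (n : ℕ) : AddSubgroup (EuclideanSpace ℝ (Fin n)) where
  carrier := { v | ∀ i, ∃ m : ℤ, v i = (m : ℝ) }
  zero_mem' := fun i => ⟨0, by simp⟩
  add_mem' := by
    intro a b ha hb i
    obtain ⟨ma, hma⟩ := ha i
    obtain ⟨mb, hmb⟩ := hb i
    exact ⟨ma + mb, by push_cast; rw [← hma, ← hmb]; rfl⟩
  neg_mem' := by
    intro a ha i
    obtain ⟨ma, hma⟩ := ha i
    exact ⟨-ma, by push_cast; rw [← hma]; rfl⟩

theorem intLattice_isClosed (n : ℕ) :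
    IsClosed ((intLattice n : Set (EuclideanSpace ℝ (Fin n)))) := by
  have h : (intLattice n : Set (EuclideanSpace ℝ (Fin n))) =
      ⋂ i, (fun v : EuclideanSpace ℝ (Fin n) => v i) ⁻¹'
        (Set.range (fun m : ℤ => (m : ℝ))) := by
    ext v
    simp only [Set.mem_iInter, Set.mem_preimage, Set.mem_range]
    constructor
    · intro hv i; obtain ⟨m, hm⟩ := hv i; exact ⟨m, hm.symm⟩
    · intro hv i; obtain ⟨m, hm⟩ := hv i; exact ⟨m, hm.symm⟩
  rw [h]
  exact isClosed_iInter fun i =>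
    (Int.isClosedEmbedding_coe_real.isClosed_range).preimage
      (EuclideanSpace.proj (𝕜 := ℝ) i).continuous

/-- The `n`-torus `ℝ^n / ℤ^n` (with the quotient metric). -/
abbrev Torus (n : ℕ) := EuclideanSpace ℝ (Fin n) ⧸ intLattice n

noncomputable instance (n : ℕ) : NormedAddCommGroup (Torus n) :=
  have : IsClosed ((intLattice n : Set (EuclideanSpace ℝ (Fin n)))) := intLattice_isClosed n
  QuotientAddGroup.instNormedAddCommGroup (intLattice n)

instance (n : ℕ) : MeasurableSpace (Torus n) := borel _
instance (n : ℕ) : BorelSpace (Torus n) := ⟨rfl⟩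

/-- The quotient map `ℝ^n → 𝕋^n`. -/
def tproj (n : ℕ) : EuclideanSpace ℝ (Fin n) → Torus n := QuotientAddGroup.mk

/-- Multiplication by a matrix as an additive homomorphism of Euclidean space. -/
def mulVecAddHom {n : ℕ} (M : Matrix (Fin n) (Fin n) ℝ) :
    EuclideanSpace ℝ (Fin n) →+ EuclideanSpace ℝ (Fin n) where
  toFun v := euc (M *ᵥ v)
  map_zero' := by
    show euc (M *ᵥ (0 : Fin n → ℝ)) = 0
    simp [euc]
  map_add' x y := by
    show euc (M *ᵥ ((x : Fin n → ℝ) + (y : Fin n → ℝ))) = _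
    rw [Matrix.mulVec_add]
    rfl

theorem intLattice_le_comap {n : ℕ} (T : Matrix (Fin n) (Fin n) ℤ) :
    intLattice n ≤ (intLattice n).comap (mulVecAddHom (intMat T)) := by
  intro v hv
  intro i
  choose m hm using hv
  refine ⟨∑ j, T i j * m j, ?_⟩
  show (intMat T *ᵥ (v : Fin n → ℝ)) i = _
  simp only [intMat, Matrix.mulVec, dotProduct, Matrix.map_apply]
  push_cast
  refine Finset.sum_congr rfl fun j _ => ?_
  rw [hm j]

/-- The toral endomorphism induced by an integer matrix `T`, determined by
`φ_T (π x) = π (T x)`. -/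
def torusMap {n : ℕ} (T : Matrix (Fin n) (Fin n) ℤ) : Torus n → Torus n :=
  QuotientAddGroup.map (intLattice n) (intLattice n) (mulVecAddHom (intMat T))
    (intLattice_le_comap T)

/-- `μ` is invariant under `f`. -/
def MeasInvariant {α : Type*} [MeasurableSpace α] (f : α → α) (μ : Measure α) : Prop :=
  ∀ B : Set α, MeasurableSet B → μ (f ⁻¹' B) = μ B

/-- `μ` is an ergodic invariant measure for `f`. -/
def MeasErgodic {α : Type*} [MeasurableSpace α] (f : α → α) (μ : Measure α) : Prop :=
  MeasInvariant f μ ∧ ∀ B : Set α, MeasurableSet B → f ⁻¹' B = B → μ B = 0 ∨ μ B = 1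

/-- The (Euclidean) operator norm of a real matrix. -/
def opNorm {n : ℕ} (M : Matrix (Fin n) (Fin n) ℝ) : ℝ :=
  sSup { t : ℝ | ∃ v : EuclideanSpace ℝ (Fin n), ‖v‖ ≤ 1 ∧ t = ‖euc (M *ᵥ v)‖ }

/-- The smallest modulus of a complex eigenvalue of an integer matrix. -/
def minMod {n : ℕ} (M : Matrix (Fin n) (Fin n) ℤ) : ℝ :=
  sInf { r : ℝ | ∃ μ : ℂ, (M.map fun x => (x : ℂ)).charpoly.IsRoot μ ∧ r = ‖μ‖ }

/-- The largest modulus of a complex eigenvalue of an integer matrix. -/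
def maxMod {n : ℕ} (M : Matrix (Fin n) (Fin n) ℤ) : ℝ :=
  sSup { r : ℝ | ∃ μ : ℂ, (M.map fun x => (x : ℂ)).charpoly.IsRoot μ ∧ r = ‖μ‖ }

/-!
A self-affine set is compact, so it lies in an integer cube `[α, α + c]^n`. Such a cube is
itself an integral self-affine tile for `M = m • 1` and the digits `(m - 1) α + c {0, …, m-1}^n`:
the `m^n` sets `M⁻¹ (cube + d)` are exactly the subcubes of side `c / m` of a subdivision of it.
-/

def cube (n : ℕ) (α c : ℝ) : Set (EuclideanSpace ℝ (Fin n)) := {x | ∀ i, x i ∈ Icc α (α + c)}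

theorem cube_eq_preimage_ofLp (n : ℕ) (α c : ℝ) :
    cube n α c = WithLp.ofLp ⁻¹' Icc (fun _ => α) (fun _ => α + c) := by
  ext x
  simp [cube, Pi.le_def, forall_and]

theorem isCompact_cube (n : ℕ) (α c : ℝ) : IsCompact (cube n α c) := by
  rw [cube_eq_preimage_ofLp]
  exact (PiLp.continuousLinearEquiv 2 ℝ _).toHomeomorph.isCompact_preimage.2 isCompact_Icc

theorem volume_cube (n : ℕ) (α c : ℝ) : volume (cube n α c) = ENNReal.ofReal c ^ n := by
  rw [cube_eq_preimage_ofLp, (PiLp.volume_preserving_ofLp _).measure_preimage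
    measurableSet_Icc.nullMeasurableSet, Real.volume_Icc_pi]
  simp

theorem closedBall_subset_cube {n : ℕ} {r c : ℝ} (hc : 2 * r ≤ c) :
    closedBall (0 : EuclideanSpace ℝ (Fin n)) r ⊆ cube n (-r) c := by
  intro x hx i
  have hxi : |x i| ≤ r := by
    simpa using (PiLp.norm_apply_le x i).trans (mem_closedBall_zero_iff.1 hx)
  rw [abs_le] at hxi
  constructor <;> linarith

theorem inv_intMat_smul_one_mulVec {n : ℕ} {m : ℤ} (hm : m ≠ 0) (v : Fin n → ℝ) :
    (intMat (m • (1 : Matrix (Fin n) (Fin n) ℤ)))⁻¹ *ᵥ v = (m : ℝ)⁻¹ • v := by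
  have : intMat (m • (1 : Matrix (Fin n) (Fin n) ℤ)) = (m : ℝ) • 1 := by
    ext i j
    simp only [intMat, Matrix.map_apply, Matrix.smul_apply, Matrix.one_apply]
    split_ifs <;> simp
  rw [this, Matrix.inv_eq_right_inv (B := (m : ℝ)⁻¹ • 1), Matrix.smul_mulVec, Matrix.one_mulVec]
  simp [smul_smul, hm]

theorem mem_Icc_iff_exists_digit {m : ℕ} (hm : 0 < m) {α c x : ℝ} (hc : 0 < c) :
    x ∈ Icc α (α + c) ↔ ∃ u : ℤ, (0 ≤ u ∧ u < m) ∧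
      m * x - ((m - 1) * α + c * u) ∈ Icc α (α + c) := by
  have hm' : (1 : ℝ) ≤ m := by exact_mod_cast hm
  constructor
  · rintro ⟨hxl, hxr⟩
    set t := m * (x - α) / c
    have ht0 : 0 ≤ t := by positivity
    have htm : t ≤ m := by rw [div_le_iff₀ hc]; nlinarith
    -- the digit is the integer part of `t`, capped at `m - 1` for `x = α + c`
    set u : ℤ := min ⌊t⌋ (m - 1)
    have hu_le : (u : ℝ) ≤ t := by
      simp only [u, Int.cast_min]
      exact (min_le_left _ _).trans (Int.floor_le t)
    have hle_u : t ≤ u + 1 := by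
      simp only [u, Int.cast_min, Int.cast_sub, Int.cast_natCast, Int.cast_one]
      rw [← min_add_add_right, le_min_iff, sub_add_cancel]
      exact ⟨(Int.lt_floor_add_one t).le, htm⟩
    refine ⟨u, ⟨le_min (Int.floor_nonneg.2 ht0) (by omega), by omega⟩, ?_, ?_⟩
    · have : c * u ≤ m * (x - α) := by
        rw [le_div_iff₀' hc] at hu_le
        linarith
      linarith
    · have : m * (x - α) ≤ c * (u + 1) := by
        rwa [div_le_iff₀' hc] at hle_u
      linarith
  · rintro ⟨u, ⟨hu0, hum⟩, hyl, hyr⟩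
    have hu0' : (0 : ℝ) ≤ u := by exact_mod_cast hu0
    have hum' : (u : ℝ) + 1 ≤ m := by exact_mod_cast hum
    constructor <;> nlinarith

theorem euc_inv_intMat_smul_one_mulVec_apply {n : ℕ} {m : ℤ} (hm : m ≠ 0)
    (y : EuclideanSpace ℝ (Fin n)) (d : Fin n → ℤ) (i : Fin n) :
    euc ((intMat (m • (1 : Matrix (Fin n) (Fin n) ℤ)))⁻¹ *ᵥ (y + euc (zVec d))) i =
      (m : ℝ)⁻¹ * (y i + d i) := by
  rw [inv_intMat_smul_one_mulVec hm]
  rfl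

theorem isSelfAffineZ_cube {n m : ℕ} (hm : 0 < m) (α : ℤ) {c : ℕ} (hc : 0 < c) :
    IsSelfAffineZ ((m : ℤ) • (1 : Matrix (Fin n) (Fin n) ℤ))
      {d : Fin n → ℤ | ∃ u : Fin n → ℤ, (∀ i, 0 ≤ u i ∧ u i < (m : ℤ)) ∧
        d = (fun _ => ((m : ℤ) - 1) * α) + (c : ℤ) • u}
      (cube n α c) := by
  have hc' : (0 : ℝ) < c := by exact_mod_cast hc
  have hmZ : (m : ℤ) ≠ 0 := by exact_mod_cast hm.ne'
  have hm' : (m : ℝ) ≠ 0 := by exact_mod_cast hm.ne'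
  have digit_cast (u : Fin n → ℤ) (i : Fin n) :
      ((((fun _ => ((m : ℤ) - 1) * α) + (c : ℤ) • u : Fin n → ℤ) i : ℤ) : ℝ) =
        (m - 1) * α + c * u i := by
    simp
  refine ⟨⟨euc fun _ => α, fun i => ⟨le_rfl, le_add_of_nonneg_right hc'.le⟩⟩,
    isCompact_cube n α c, ?_⟩
  ext x
  simp only [mem_iUnion, mem_image, exists_prop, exists_exists_and_eq_and]
  constructor
  · intro hx
    choose u hu hy using fun i => (mem_Icc_iff_exists_digit hm hc').1 (hx i)
    refine ⟨_, ⟨u, hu, rfl⟩, euc fun i => m * x i - ((m - 1) * α + c * u i), hy, ?_⟩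
    ext i
    rw [euc_inv_intMat_smul_one_mulVec_apply hmZ, digit_cast,
      Int.cast_natCast]
    exact (congrArg _ (sub_add_cancel _ _)).trans (inv_mul_cancel_left₀ hm' _)
  · rintro ⟨_, ⟨u, hu, rfl⟩, y, hy, rfl⟩ i
    refine (mem_Icc_iff_exists_digit hm hc').2 ⟨u i, hu i, ?_⟩
    rw [euc_inv_intMat_smul_one_mulVec_apply hmZ, digit_cast,
      Int.cast_natCast, mul_inv_cancel_left₀ hm', add_sub_cancel_right]
    exact hy i

theorem selfAffine_subset_integral_tile_general {n : ℕ} (T : Matrix (Fin n) (Fin n) ℝ)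
    (A : Finset (Fin n → ℝ))
    (F : Set (EuclideanSpace ℝ (Fin n))) (hF : IsSelfAffineR T (↑A) F) :
    ∃ (m : ℕ) (a : Fin n → ℤ) (c₀ : ℕ), 2 ≤ m ∧ 1 ≤ c₀ ∧
      ∃ Γ : Set (EuclideanSpace ℝ (Fin n)),
        IsSelfAffineZ ((m : ℤ) • (1 : Matrix (Fin n) (Fin n) ℤ))
          { d : Fin n → ℤ | ∃ u : Fin n → ℤ, (∀ i, 0 ≤ u i ∧ u i < (m : ℤ)) ∧
              d = a + (c₀ : ℤ) • u } Γ ∧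
        0 < volume Γ ∧ F ⊆ Γ := by
  obtain ⟨R, hR⟩ := hF.2.1.isBounded.subset_closedBall 0
  set N := ⌈R⌉₊
  have hFN : F ⊆ cube n (-N) (2 * N + 1) :=
    hR.trans <| (closedBall_subset_closedBall (Nat.le_ceil R)).trans <|
      closedBall_subset_cube (by linarith)
  refine ⟨2, fun _ => ((2 : ℕ) - 1 : ℤ) * -N, 2 * N + 1, le_rfl, by omega, _,
    isSelfAffineZ_cube two_pos _ (by omega), ?_, by push_cast; exact hFN⟩
  rw [volume_cube]
  exact ENNReal.pow_pos (ENNReal.ofReal_pos.2 (by positivity)) n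

/-- every self-affine set is contained in an integral self-affine tile generated
by `M = m·I` and the digit set `D = a + c₀·{0,…,m−1}^n`. -/
theorem selfAffine_subset_integral_tile {n : ℕ} (T : Matrix (Fin n) (Fin n) ℝ)
    (A : Finset (Fin n → ℝ)) (hT : IsExpandingR T) (hA : A.Nonempty)
    (F : Set (EuclideanSpace ℝ (Fin n))) (hF : IsSelfAffineR T (↑A) F) :
    ∃ (m : ℕ) (a : Fin n → ℤ) (c₀ : ℕ), 2 ≤ m ∧ 1 ≤ c₀ ∧
      ∃ Γ : Set (EuclideanSpace ℝ (Fin n)),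
        IsSelfAffineZ ((m : ℤ) • (1 : Matrix (Fin n) (Fin n) ℤ))
          { d : Fin n → ℤ | ∃ u : Fin n → ℤ, (∀ i, 0 ≤ u i ∧ u i < (m : ℤ)) ∧
              d = a + (c₀ : ℤ) • u } Γ ∧
        0 < volume Γ ∧ F ⊆ Γ :=
  selfAffine_subset_integral_tile_general T A F hF

end FracPert
end
end

section
/- Let F = F(T,A) ⊆ ℝ^n be an integral self-affine set, k ≥ 1, and a_i, a_j ∈ A_k. (a) If T^{-k}(F + a_i) ∩ T^{-k}(F + a_j) ≠ ∅, then ‖a_j − a_i‖ ≤ diam F. (b) If T^{-k}(F + a_i) ∩ T^{-k}(F + a_j) = ∅, then the extended digit differences tend to infinity uniformly: for every R > 0 there exists L ≥ k such that for all l ≥ L and all a', a'' ∈ A_{l−k}, one has ‖(T^{l−k} a_j + a'') − (T^{l−k} a_i + a')‖ > R. -/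
/-!
Part (a): a common point of the two cylinders is `T⁻ᵏ (p + aᵢ) = T⁻ᵏ (q + aⱼ)` with `p, q ∈ F`,
so `aⱼ - aᵢ = p - q`.

Part (b): the two cylinders are disjoint compact sets, hence at distance at least some `r > 0`.
Iterating the self-affinity, `T⁻ᵐ (z + a) ∈ F` for `z ∈ F` and `a ∈ A_m`, so with `m = l - k` the
points `T⁻ᵏ (T⁻ᵐ (z + a') + aᵢ)` and `T⁻ᵏ (T⁻ᵐ (z + a'') + aⱼ)` lie in the two cylinders, and their
difference is `T⁻ˡ` applied to the extended digit difference. As `T` is expanding, the spectral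
radius of `T⁻¹` is `< 1`, so `‖T⁻ˡ‖ → 0` by Gelfand's formula, and the digit difference is at least
`r / ‖T⁻ˡ‖ → ∞`.
-/

open Filter MeasureTheory Metric Set Matrix
open scoped Topology ENNReal NNReal

noncomputable section

namespace FracPert

/-- The cylinder set `T^{-k}(F + a)`. -/
def cylinder {n : ℕ} (T : Matrix (Fin n) (Fin n) ℤ) (k : ℕ) (a : Fin n → ℤ)
    (F : Set (EuclideanSpace ℝ (Fin n))) : Set (EuclideanSpace ℝ (Fin n)) :=
  (fun x : EuclideanSpace ℝ (Fin n) => euc ((intMat T ^ k)⁻¹ *ᵥ (x + euc (zVec a)))) '' F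

theorem tendsto_pow_atTop_nhds_zero_of_forall_mem_spectrum_norm_lt_one {A : Type*} [NormedRing A]
    [NormedAlgebra ℂ A] [CompleteSpace A] {a : A} (ha : ∀ μ ∈ spectrum ℂ a, ‖μ‖ < 1) :
    Tendsto (fun l : ℕ => a ^ l) atTop (𝓝 0) := by
  cases subsingleton_or_nontrivial A
  · simp [Subsingleton.elim _ (0 : A)]
  have hρ : spectralRadius ℂ a < (1 : ℝ≥0) :=
    spectrum.spectralRadius_lt_of_forall_lt a fun μ hμ => mod_cast ha μ hμ
  obtain ⟨t, hρt, ht1⟩ := ENNReal.lt_iff_exists_nnreal_btwn.1 hρ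
  have hpow : ∀ᶠ l : ℕ in atTop, ‖a ^ l‖ ≤ (t : ℝ) ^ l := by
    filter_upwards [(spectrum.pow_nnnorm_pow_one_div_tendsto_nhds_spectralRadius a).eventually
      (gt_mem_nhds hρt), eventually_ge_atTop 1] with l hl hl1
    rw [one_div, ENNReal.rpow_inv_lt_iff (by positivity), ENNReal.rpow_natCast] at hl
    exact_mod_cast hl.le
  exact tendsto_zero_iff_norm_tendsto_zero.2 <| squeeze_zero' (.of_forall fun _ => norm_nonneg _)
    hpow (tendsto_pow_atTop_nhds_zero_of_lt_one t.2 (mod_cast ht1))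

section Expanding

variable {n : ℕ} {M : Matrix (Fin n) (Fin n) ℝ}

theorem IsExpandingZ.isExpandingR_intMat {T : Matrix (Fin n) (Fin n) ℤ} (hT : IsExpandingZ T) :
    IsExpandingR (intMat T) := fun μ hμ =>
  hT μ (by simpa [intMat, Matrix.map_map, Function.comp_def] using hμ)

theorem IsExpandingR.isUnit_det (hM : IsExpandingR M) : IsUnit M.det := by
  refine isUnit_iff_ne_zero.2 fun h0 => ?_
  have hsing : ¬IsUnit (M.map fun x => (x : ℂ)) := by
    rw [Matrix.isUnit_iff_isUnit_det, isUnit_iff_ne_zero, not_not]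
    have h := (RingHom.map_det Complex.ofRealHom M).symm
    rwa [h0, map_zero] at h
  have := hM 0 (Matrix.mem_spectrum_iff_isRoot_charpoly.1 ((spectrum.zero_mem_iff ℂ).2 hsing))
  norm_num at this

theorem IsExpandingR.tendsto_inv_pow (hM : IsExpandingR M) :
    Tendsto (fun l : ℕ => (M ^ l)⁻¹) atTop (𝓝 0) := by
  have hmap : ∀ P Q : Matrix (Fin n) (Fin n) ℝ,
      (P * Q).map (fun x => (x : ℂ)) = P.map (fun x => (x : ℂ)) * Q.map (fun x => (x : ℂ)) :=
    fun P Q => Matrix.map_mul (f := Complex.ofRealHom)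
  let u : (Matrix (Fin n) (Fin n) ℂ)ˣ :=
    { val := M.map fun x => (x : ℂ)
      inv := M⁻¹.map fun x => (x : ℂ)
      val_inv := by rw [← hmap, M.mul_nonsing_inv hM.isUnit_det]; simp
      inv_val := by rw [← hmap, M.nonsing_inv_mul hM.isUnit_det]; simp }
  have hspec : ∀ μ ∈ spectrum ℂ (↑u⁻¹ : Matrix (Fin n) (Fin n) ℂ), ‖μ‖ < 1 := fun μ hμ => by
    have := hM μ⁻¹ (Matrix.mem_spectrum_iff_isRoot_charpoly.1 (spectrum.inv₀_mem_iff.2 hμ))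
    rw [norm_inv] at this
    exact (one_lt_inv_iff₀.1 this).2
  have hC : Tendsto (fun l : ℕ => (M⁻¹ ^ l).map fun x => (x : ℂ)) atTop (𝓝 0) := by
    have h : Tendsto (fun l : ℕ => (M⁻¹.map fun x => (x : ℂ)) ^ l) atTop (𝓝 0) := by
      -- the L2 operator norm makes the matrices a Banach algebra inducing their usual topology
      open scoped Matrix.Norms.L2Operator in
      exact tendsto_pow_atTop_nhds_zero_of_forall_mem_spectrum_norm_lt_one hspec
    have hpow : ∀ l : ℕ, (M⁻¹ ^ l).map (fun x => (x : ℂ)) = (M⁻¹.map fun x => (x : ℂ)) ^ l :=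
      Matrix.map_pow M⁻¹ Complex.ofRealHom
    simpa only [hpow] using h
  have := ((continuous_id.matrix_map Complex.continuous_re).tendsto 0).comp hC
  simpa [Function.comp_def, Matrix.map_map] using this

open scoped Matrix.Norms.L2Operator in
theorem IsExpandingR.eventually_norm_inv_pow_mulVec_le (hM : IsExpandingR M) {δ : ℝ} (hδ : 0 < δ) :
    ∀ᶠ l : ℕ in atTop, ∀ w : Fin n → ℝ, ‖euc ((M ^ l)⁻¹ *ᵥ w)‖ ≤ δ * ‖euc w‖ := by
  filter_upwards [hM.tendsto_inv_pow.norm.eventually (gt_mem_nhds (by simpa using hδ))]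
    with l hl w
  exact ((M ^ l)⁻¹.l2_opNorm_mulVec (euc w)).trans (by gcongr)

end Expanding

section Cylinder

variable {n : ℕ} (M : Matrix (Fin n) (Fin n) ℝ)

def cylinderMap (k : ℕ) (a : Fin n → ℝ) (x : EuclideanSpace ℝ (Fin n)) :
    EuclideanSpace ℝ (Fin n) :=
  euc ((M ^ k)⁻¹ *ᵥ (x + euc a))

theorem continuous_cylinderMap (k : ℕ) (a : Fin n → ℝ) : Continuous (cylinderMap M k a) := by
  unfold cylinderMap euc
  fun_prop

theorem cylinderMap_zero (x : EuclideanSpace ℝ (Fin n)) : cylinderMap M 0 0 x = x := by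
  simp [cylinderMap, euc]

variable {M}

theorem cylinderMap_cylinderMap (hM : IsUnit M.det) (k m : ℕ) (b c : Fin n → ℝ)
    (x : EuclideanSpace ℝ (Fin n)) :
    cylinderMap M k b (cylinderMap M m c x) = cylinderMap M (m + k) (M ^ m *ᵥ b + c) x := by
  have hMm : IsUnit (M ^ m).det := by rw [Matrix.det_pow]; exact hM.pow m
  simp only [cylinderMap, euc, pow_add, Matrix.mul_inv_rev, ← Matrix.mulVec_mulVec]
  congr 2
  simp only [Matrix.mulVec_add, Matrix.mulVec_mulVec, Matrix.nonsing_inv_mul _ hMm,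
    Matrix.one_mulVec]
  abel

theorem cylinderMap_sub_cylinderMap (k : ℕ) (b c : Fin n → ℝ) (x : EuclideanSpace ℝ (Fin n)) :
    cylinderMap M k b x - cylinderMap M k c x = euc ((M ^ k)⁻¹ *ᵥ (b - c)) := by
  simp only [cylinderMap, euc, ← WithLp.toLp_sub, ← Matrix.mulVec_sub]
  congr 2
  simp

theorem sub_eq_of_cylinderMap_eq (hM : IsUnit M.det) {k : ℕ} {b c : Fin n → ℝ}
    {x y : EuclideanSpace ℝ (Fin n)} (h : cylinderMap M k b x = cylinderMap M k c y) :
    x - y = euc (c - b) := by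
  have hMk : IsUnit (M ^ k) := by
    rw [Matrix.isUnit_iff_isUnit_det, Matrix.det_pow]; exact hM.pow k
  have hinj := Matrix.mulVec_injective_iff_isUnit.2 (Matrix.isUnit_nonsing_inv_iff.2 hMk)
  have h' := hinj (WithLp.toLp_injective 2 h)
  simp only [euc] at h' ⊢
  ext i
  have := congrFun h' i
  simp at this ⊢
  linarith

end Cylinder

section DigitSets

variable {n : ℕ}

theorem exists_of_mem_digitSetIterR_succ {M : Matrix (Fin n) (Fin n) ℝ} {D : Set (Fin n → ℝ)}
    {m : ℕ} {c : Fin n → ℝ} (hc : c ∈ digitSetIterR M D (m + 1)) :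
    ∃ a ∈ D, ∃ c' ∈ digitSetIterR M D m, c = M ^ m *ᵥ a + c' := by
  obtain ⟨a, ha, rfl⟩ := hc
  refine ⟨a 0, ha 0, _, ⟨fun i => a i.succ, fun i => ha i.succ, rfl⟩, ?_⟩
  rw [Fin.sum_univ_succ]
  congr 1
  refine Finset.sum_congr rfl fun i _ => ?_
  congr 2
  simp only [Fin.val_succ]
  omega

theorem IsSelfAffineR.cylinderMap_mem {M : Matrix (Fin n) (Fin n) ℝ} {D : Set (Fin n → ℝ)}
    {F : Set (EuclideanSpace ℝ (Fin n))} (hF : IsSelfAffineR M D F) (hM : IsUnit M.det)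
    {m : ℕ} {c : Fin n → ℝ} (hc : c ∈ digitSetIterR M D m) {z : EuclideanSpace ℝ (Fin n)}
    (hz : z ∈ F) : cylinderMap M m c z ∈ F := by
  induction m generalizing c with
  | zero =>
    obtain ⟨a, -, rfl⟩ := hc
    simpa [cylinderMap_zero] using hz
  | succ m ih =>
    obtain ⟨a, ha, c', hc', rfl⟩ := exists_of_mem_digitSetIterR_succ hc
    rw [← cylinderMap_cylinderMap hM, hF.2.2]
    exact Set.mem_biUnion ha ⟨_, ih hc', by simp [cylinderMap]⟩

theorem zVec_add (u v : Fin n → ℤ) : zVec (u + v) = zVec u + zVec v := by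
  funext i
  simp [zVec]

theorem zVec_sub (u v : Fin n → ℤ) : zVec (u - v) = zVec u - zVec v := by
  funext i
  simp [zVec]

theorem intMat_pow (T : Matrix (Fin n) (Fin n) ℤ) (k : ℕ) : intMat (T ^ k) = intMat T ^ k :=
  Matrix.map_pow T (Int.castRingHom ℝ) k

theorem zVec_mulVec (B : Matrix (Fin n) (Fin n) ℤ) (v : Fin n → ℤ) :
    zVec (B *ᵥ v) = intMat B *ᵥ zVec v := by
  funext i
  simp [zVec, intMat, Matrix.mulVec, dotProduct]

theorem zVec_mem_digitSetIterR {T : Matrix (Fin n) (Fin n) ℤ} {A : Set (Fin n → ℤ)} {k : ℕ}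
    {v : Fin n → ℤ} (hv : v ∈ digitSetIter T A k) :
    zVec v ∈ digitSetIterR (intMat T) (zVec '' A) k := by
  obtain ⟨a, ha, rfl⟩ := hv
  refine ⟨fun i => zVec (a i), fun i => Set.mem_image_of_mem _ (ha i), ?_⟩
  simp only [← intMat_pow, ← zVec_mulVec]
  funext j
  simp [zVec, Finset.sum_apply]

end DigitSets

section Dichotomy

variable {n : ℕ} {M : Matrix (Fin n) (Fin n) ℝ} {F : Set (EuclideanSpace ℝ (Fin n))}

theorem norm_sub_le_diam_of_inter_nonempty (hM : IsUnit M.det) (hF : Bornology.IsBounded F)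
    {k : ℕ} {b c : Fin n → ℝ} (h : (cylinderMap M k b '' F ∩ cylinderMap M k c '' F).Nonempty) :
    ‖euc (c - b)‖ ≤ diam F := by
  obtain ⟨_, ⟨p, hp, rfl⟩, q, hq, hpq⟩ := h
  rw [← sub_eq_of_cylinderMap_eq hM hpq.symm, ← dist_eq_norm]
  exact dist_le_diam_of_mem hF hp hq

theorem IsSelfAffineR.exists_lt_norm_sub_of_disjoint {D : Set (Fin n → ℝ)}
    (hF : IsSelfAffineR M D F) (hM : IsExpandingR M) {k : ℕ} {b c : Fin n → ℝ}
    (h : Disjoint (cylinderMap M k b '' F) (cylinderMap M k c '' F)) {R : ℝ} (hR : 0 < R) :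
    ∃ L, k ≤ L ∧ ∀ l, L ≤ l → ∀ a' a'', a' ∈ digitSetIterR M D (l - k) →
      a'' ∈ digitSetIterR M D (l - k) →
      R < ‖euc ((M ^ (l - k) *ᵥ c + a'') - (M ^ (l - k) *ᵥ b + a'))‖ := by
  have hdet := hM.isUnit_det
  have hcompact : ∀ a, IsCompact (cylinderMap M k a '' F) := fun a =>
    hF.2.1.image (continuous_cylinderMap M k a)
  obtain ⟨r, hr, hsep⟩ := Metric.exists_pos_forall_lt_edist (hcompact b) (hcompact c).isClosed h
  obtain ⟨L, hL⟩ := eventually_atTop.1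
    (hM.eventually_norm_inv_pow_mulVec_le (div_pos (NNReal.coe_pos.2 hr) hR))
  refine ⟨max L k, le_max_right _ _, fun l hl a' a'' ha' ha'' => ?_⟩
  obtain ⟨z, hz⟩ := hF.1
  have hlk : l - k + k = l := Nat.sub_add_cancel (le_of_max_le_right hl)
  set x := cylinderMap M k b (cylinderMap M (l - k) a' z) with hx
  set y := cylinderMap M k c (cylinderMap M (l - k) a'' z) with hy
  have hsep_xy : (r : ℝ) < dist y x := by
    have := hsep x (mem_image_of_mem _ (hF.cylinderMap_mem hdet ha' hz))
      y (mem_image_of_mem _ (hF.cylinderMap_mem hdet ha'' hz))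
    rw [edist_nndist, nndist_comm] at this
    exact_mod_cast this
  have hdist : dist y x =
      ‖euc ((M ^ l)⁻¹ *ᵥ ((M ^ (l - k) *ᵥ c + a'') - (M ^ (l - k) *ᵥ b + a')))‖ := by
    rw [dist_eq_norm, hx, hy, cylinderMap_cylinderMap hdet, cylinderMap_cylinderMap hdet, hlk,
      cylinderMap_sub_cylinderMap]
  have := hsep_xy.trans_le (hdist ▸ hL l (le_of_max_le_left hl) _)
  rw [div_mul_eq_mul_div, lt_div_iff₀ hR] at this
  exact lt_of_mul_lt_mul_left this (NNReal.coe_nonneg r)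

end Dichotomy

theorem cylinder_digit_dichotomy_general {n : ℕ} (T : Matrix (Fin n) (Fin n) ℤ)
    (A : Finset (Fin n → ℤ)) (hT : IsExpandingZ T)
    (F : Set (EuclideanSpace ℝ (Fin n))) (hF : IsSelfAffineZ T (↑A) F)
    (k : ℕ) (ai aj : Fin n → ℤ) :
    ((cylinder T k ai F ∩ cylinder T k aj F).Nonempty →
      ‖euc (zVec (aj - ai))‖ ≤ Metric.diam F) ∧
    (cylinder T k ai F ∩ cylinder T k aj F = ∅ →
      ∀ R : ℝ, 0 < R → ∃ L : ℕ, k ≤ L ∧ ∀ l : ℕ, L ≤ l →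
        ∀ a' a'' : Fin n → ℤ, a' ∈ digitSetIter T (↑A) (l - k) →
          a'' ∈ digitSetIter T (↑A) (l - k) →
          R < ‖euc (zVec (((T ^ (l - k)) *ᵥ aj + a'') - ((T ^ (l - k)) *ᵥ ai + a')))‖) := by
  have hM := hT.isExpandingR_intMat
  refine ⟨fun h => ?_, fun h R hR => ?_⟩
  · rw [zVec_sub]
    exact norm_sub_le_diam_of_inter_nonempty hM.isUnit_det hF.2.1.isBounded h
  · obtain ⟨L, hkL, hL⟩ :=
      hF.exists_lt_norm_sub_of_disjoint hM (Set.disjoint_iff_inter_eq_empty.2 h) hR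
    refine ⟨L, hkL, fun l hl a' a'' ha' ha'' => ?_⟩
    rw [zVec_sub, zVec_add, zVec_add, zVec_mulVec, zVec_mulVec, intMat_pow]
    exact hL l hl _ _ (zVec_mem_digitSetIterR ha') (zVec_mem_digitSetIterR ha'')

/-- (a) digits of intersecting cylinders differ by at most `diam F`;
(b) digits of disjoint cylinders have extended digit differences tending to infinity
uniformly. -/
theorem cylinder_digit_dichotomy {n : ℕ} (T : Matrix (Fin n) (Fin n) ℤ)
    (A : Finset (Fin n → ℤ)) (hT : IsExpandingZ T) (hA : A.Nonempty)
    (F : Set (EuclideanSpace ℝ (Fin n))) (hF : IsSelfAffineZ T (↑A) F)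
    (k : ℕ) (hk : 1 ≤ k) (ai aj : Fin n → ℤ)
    (hai : ai ∈ digitSetIter T (↑A) k) (haj : aj ∈ digitSetIter T (↑A) k) :
    ((cylinder T k ai F ∩ cylinder T k aj F).Nonempty →
      ‖euc (zVec (aj - ai))‖ ≤ Metric.diam F) ∧
    (cylinder T k ai F ∩ cylinder T k aj F = ∅ →
      ∀ R : ℝ, 0 < R → ∃ L : ℕ, k ≤ L ∧ ∀ l : ℕ, L ≤ l →
        ∀ a' a'' : Fin n → ℤ, a' ∈ digitSetIter T (↑A) (l - k) →
          a'' ∈ digitSetIter T (↑A) (l - k) →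
          R < ‖euc (zVec (((T ^ (l - k)) *ᵥ aj + a'') - ((T ^ (l - k)) *ᵥ ai + a')))‖) :=
  cylinder_digit_dichotomy_general T A hT F hF k ai aj

end FracPert
end
end
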